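/- Let ρ be a strictly positive density on a finite-dimensional Hilbert space and let f be a self-adjoint operator with tr(ρf) = 0. Write f̄ = ρ^{1/4} f ρ^{1/4} and B(f) = ∫₀^∞ tr( f · ρ^{1/2}(s+ρ^{1/2})⁻¹ · f · (2s+ρ^{1/2})(s+ρ^{1/2})⁻² · ρ ) ds. Then B(f) ≥ (3/2)·tr(f̄²). -/

import Mathlib

/-!
Diagonalise `ρ` with eigenvalues `λ_k`, put `a_k = √λ_k`, and let `c_kj = |⟨e_k, f e_j⟩|²` in
the eigenbasis. Both sides become double sums over pairs of eigenvalues: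
`B(f) = ∑ c_kj I(a_k, a_j)` with `I(a, b) = ∫₀^∞ b (2s + a) a² / ((s + b)(s + a)²) ds`, and
`tr(f̄²) = ∑ c_kj a_k a_j`. As `c` is symmetric, it suffices that `I(a, b) + I(b, a) ≥ 3ab`.
The integrals are elementary: `I(a, b) + I(b, a) = ab ((a + b)(log a - log b)/(a - b) + 1)` for
`a ≠ b` and `I(a, a) = 3a²/2`, so the claim reduces to the logarithmic-mean inequality
`(a + b)(log a - log b) ≥ 2(a - b)` for `a ≥ b`.
-/

open MeasureTheory
open scoped ComplexOrder

noncomputable section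

def rpowM {n : ℕ} (ρ : Matrix (Fin n) (Fin n) ℂ) (p : ℝ) : Matrix (Fin n) (Fin n) ℂ :=
  cfc (fun x : ℝ => x ^ p) ρ

/-- The second-order coefficient in the expansion of `H(1+εf)`:
`B(f) = ∫₀^∞ tr( f·ρ^{1/2}(s+ρ^{1/2})⁻¹·f·(2s+ρ^{1/2})(s+ρ^{1/2})⁻²·ρ ) ds`. -/
def Bcoef {n : ℕ} (ρ f : Matrix (Fin n) (Fin n) ℂ) : ℝ :=
  ∫ s in Set.Ioi (0 : ℝ),
    ((f * (rpowM ρ (1/2) * ((s : ℂ) • 1 + rpowM ρ (1/2))⁻¹) * f *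
      (((2 * s : ℝ) : ℂ) • 1 + rpowM ρ (1/2)) *
      (((s : ℂ) • 1 + rpowM ρ (1/2))⁻¹) ^ 2 * ρ).trace).re

open Set Filter Topology

lemma two_mul_sub_one_le_add_one_mul_log {t : ℝ} (ht : 1 ≤ t) :
    2 * (t - 1) ≤ (t + 1) * Real.log t := by
  let φ : ℝ → ℝ := fun s => (s + 1) * Real.log s - 2 * (s - 1)
  have hderiv : ∀ s ∈ Ici (1 : ℝ), HasDerivAt φ (Real.log s + (s + 1) * s⁻¹ - 2) s := by
    intro s hs
    refine ((((hasDerivAt_id' s).add_const 1).mul (Real.hasDerivAt_log (by grind))).sub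
      (((hasDerivAt_id' s).sub_const 1).const_mul 2)).congr_deriv ?_
    ring
  have hmono : MonotoneOn φ (Ici 1) := by
    refine monotoneOn_of_hasDerivWithinAt_nonneg (convex_Ici 1)
      (fun s hs => (hderiv s hs).continuousAt.continuousWithinAt)
      (fun s hs => (hderiv s (interior_subset hs)).hasDerivWithinAt) fun s hs => ?_
    rw [interior_Ici] at hs
    have hs0 : 0 < s := by grind
    have hlog := Real.one_sub_inv_le_log_of_pos hs0
    have hsplit : (s + 1) * s⁻¹ = 1 + s⁻¹ := by field_simp
    linarith
  simpa [φ] using hmono self_mem_Ici ht ht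

lemma two_mul_sub_le_add_mul_log_sub_log {a b : ℝ} (hb : 0 < b) (hab : b ≤ a) :
    2 * (a - b) ≤ (a + b) * (Real.log a - Real.log b) := by
  have h := two_mul_sub_one_le_add_one_mul_log ((one_le_div hb).2 hab)
  rw [Real.log_div (hb.trans_le hab).ne' hb.ne'] at h
  have key : b * (2 * (a / b - 1)) ≤ b * ((a / b + 1) * (Real.log a - Real.log b)) :=
    mul_le_mul_of_nonneg_left h hb.le
  field_simp at key
  linarith

lemma tendsto_log_add_sub_log_add (a b : ℝ) :
    Tendsto (fun s => Real.log (s + b) - Real.log (s + a)) atTop (𝓝 0) := by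
  refine ((Real.tendsto_log_comp_add_sub_log (b - a)).comp
    (tendsto_atTop_add_const_right _ a tendsto_id)).congr fun s => ?_
  simp only [Function.comp_apply, id]
  ring_nf

lemma tendsto_inv_add_atTop (a : ℝ) : Tendsto (fun s : ℝ => (s + a)⁻¹) atTop (𝓝 0) :=
  tendsto_inv_atTop_zero.comp (tendsto_atTop_add_const_right _ a tendsto_id)

def bKernel (a b s : ℝ) : ℝ := b / (s + b) * ((2 * s + a) / (s + a) ^ 2) * a ^ 2

lemma bKernel_nonneg {a b s : ℝ} (ha : 0 ≤ a) (hb : 0 ≤ b) (hs : 0 ≤ s) : 0 ≤ bKernel a b s := by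
  unfold bKernel; positivity

lemma integral_bKernel_of_ne {a b : ℝ} (ha : 0 < a) (hb : 0 < b) (hab : a ≠ b) :
    IntegrableOn (bKernel a b) (Ioi 0) ∧
      ∫ s in Ioi 0, bKernel a b s =
        a ^ 2 * b * ((a - 2 * b) / (a - b) ^ 2 * (Real.log a - Real.log b) + 1 / (a - b)) := by
  let G : ℝ → ℝ := fun s => a ^ 2 * b *
    ((a - 2 * b) / (a - b) ^ 2 * (Real.log (s + b) - Real.log (s + a)) - a / (a - b) * (s + a)⁻¹)
  have hderiv : ∀ s ∈ Ici (0 : ℝ), HasDerivAt G (bKernel a b s) s := by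
    intro s hs
    have hsa : s + a ≠ 0 := by grind
    have hsb : s + b ≠ 0 := by grind
    have hlog := (((hasDerivAt_id' s).add_const b).log hsb).sub
      (((hasDerivAt_id' s).add_const a).log hsa)
    have hinv := ((hasDerivAt_id' s).add_const a).fun_inv hsa
    refine ((hlog.const_mul _).sub (hinv.const_mul _)).const_mul _ |>.congr_deriv ?_
    have : a - b ≠ 0 := sub_ne_zero.2 hab
    unfold bKernel
    field_simp
    ring
  have hG : Tendsto G atTop (𝓝 0) := by
    simpa [G] using (((tendsto_log_add_sub_log_add a b).const_mul ((a - 2 * b) / (a - b) ^ 2)).sub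
      ((tendsto_inv_add_atTop a).const_mul (a / (a - b)))).const_mul (a ^ 2 * b)
  have hnonneg : ∀ s ∈ Ioi (0 : ℝ), 0 ≤ bKernel a b s := fun s hs =>
    bKernel_nonneg ha.le hb.le (le_of_lt hs)
  refine ⟨integrableOn_Ioi_deriv_of_nonneg' hderiv hnonneg hG, ?_⟩
  rw [integral_Ioi_of_hasDerivAt_of_nonneg' hderiv hnonneg hG]
  have : a - b ≠ 0 := sub_ne_zero.2 hab
  simp only [G, zero_add]
  field_simp
  ring

lemma integral_bKernel_self {a : ℝ} (ha : 0 < a) :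
    IntegrableOn (bKernel a a) (Ioi 0) ∧ ∫ s in Ioi 0, bKernel a a s = 3 / 2 * a ^ 2 := by
  let G : ℝ → ℝ := fun s => a ^ 3 * (-2 * (s + a)⁻¹ + a / 2 * ((s + a)⁻¹) ^ 2)
  have hderiv : ∀ s ∈ Ici (0 : ℝ), HasDerivAt G (bKernel a a s) s := by
    intro s hs
    have hsa : s + a ≠ 0 := by grind
    have hinv := ((hasDerivAt_id' s).add_const a).fun_inv hsa
    refine ((hinv.const_mul (-2)).add ((hinv.pow 2).const_mul (a / 2))).const_mul (a ^ 3)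
      |>.congr_deriv ?_
    simp only [bKernel, Nat.cast_ofNat, Nat.add_one_sub_one, pow_one]
    field_simp
    ring
  have hG : Tendsto G atTop (𝓝 0) := by
    simpa [G] using (((tendsto_inv_add_atTop a).const_mul (-2)).add
      (((tendsto_inv_add_atTop a).pow 2).const_mul (a / 2))).const_mul (a ^ 3)
  have hnonneg : ∀ s ∈ Ioi (0 : ℝ), 0 ≤ bKernel a a s := fun s hs =>
    bKernel_nonneg ha.le ha.le (le_of_lt hs)
  refine ⟨integrableOn_Ioi_deriv_of_nonneg' hderiv hnonneg hG, ?_⟩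
  rw [integral_Ioi_of_hasDerivAt_of_nonneg' hderiv hnonneg hG]
  simp only [G, zero_add]
  field_simp
  ring

lemma integrableOn_bKernel {a b : ℝ} (ha : 0 < a) (hb : 0 < b) :
    IntegrableOn (bKernel a b) (Ioi 0) := by
  rcases eq_or_ne a b with rfl | hab
  · exact (integral_bKernel_self ha).1
  · exact (integral_bKernel_of_ne ha hb hab).1

lemma three_mul_le_integral_bKernel_add_of_lt {a b : ℝ} (hb : 0 < b) (hab : b < a) :
    3 * (a * b) ≤ (∫ s in Ioi 0, bKernel a b s) + ∫ s in Ioi 0, bKernel b a s := by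
  have ha : 0 < a := hb.trans hab
  rw [(integral_bKernel_of_ne ha hb hab.ne').2, (integral_bKernel_of_ne hb ha hab.ne).2]
  have hsub : 0 < a - b := sub_pos.2 hab
  have hsum : a ^ 2 * b * ((a - 2 * b) / (a - b) ^ 2 * (Real.log a - Real.log b) + 1 / (a - b))
      + b ^ 2 * a * ((b - 2 * a) / (b - a) ^ 2 * (Real.log b - Real.log a) + 1 / (b - a))
      = a * b * ((a + b) * (Real.log a - Real.log b) / (a - b) + 1) := by
    have : b - a ≠ 0 := by linarith
    field_simp
    ring
  have hlog : 2 ≤ (a + b) * (Real.log a - Real.log b) / (a - b) :=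
    (le_div_iff₀ hsub).2 (by linarith [two_mul_sub_le_add_mul_log_sub_log hb hab.le])
  rw [hsum]
  nlinarith [mul_pos ha hb]

lemma three_mul_le_integral_bKernel_add {a b : ℝ} (ha : 0 < a) (hb : 0 < b) :
    3 * (a * b) ≤ (∫ s in Ioi 0, bKernel a b s) + ∫ s in Ioi 0, bKernel b a s := by
  rcases lt_trichotomy a b with hab | rfl | hab
  · linarith [three_mul_le_integral_bKernel_add_of_lt ha hab]
  · rw [(integral_bKernel_self ha).2]
    linarith
  · exact three_mul_le_integral_bKernel_add_of_lt hb hab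

lemma sum_sum_mul_le_two_mul_of_symm {ι : Type*} [Fintype ι] {c V W : ι → ι → ℝ}
    (hc₀ : ∀ k j, 0 ≤ c k j) (hc : ∀ k j, c k j = c j k) (hW : ∀ k j, W k j ≤ V k j + V j k) :
    ∑ k, ∑ j, c k j * W k j ≤ 2 * ∑ k, ∑ j, c k j * V k j := by
  have hswap : ∑ k, ∑ j, c k j * V j k = ∑ k, ∑ j, c k j * V k j := by
    rw [Finset.sum_comm]
    simp only [hc]
  calc ∑ k, ∑ j, c k j * W k j
      ≤ ∑ k, ∑ j, c k j * (V k j + V j k) :=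
        Finset.sum_le_sum fun k _ => Finset.sum_le_sum fun j _ =>
          mul_le_mul_of_nonneg_left (hW k j) (hc₀ k j)
    _ = 2 * ∑ k, ∑ j, c k j * V k j := by
        simp only [mul_add, Finset.sum_add_distrib, hswap]
        ring

namespace Matrix

variable {n : Type*} [Fintype n] [DecidableEq n]

lemma trace_mul_diagonal_mul_mul_diagonal {R : Type*} [CommSemiring R] (g : Matrix n n R)
    (d e : n → R) :
    (g * diagonal d * g * diagonal e).trace = ∑ k, ∑ j, g k j * d j * g j k * e k := by
  simp only [trace, diag_apply, mul_diagonal, mul_apply (M := g * diagonal d), Finset.sum_mul]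

variable {𝕜 : Type*} [RCLike 𝕜]

lemma trace_conjStarAlgAut (u : unitaryGroup n 𝕜) (X : Matrix n n 𝕜) :
    (Unitary.conjStarAlgAut 𝕜 _ u X).trace = X.trace := by
  rw [Unitary.conjStarAlgAut_apply, trace_mul_cycle, Unitary.star_mul_self_of_mem u.2, one_mul]

lemma PosDef.pos_of_mem_spectrum {A : Matrix n n 𝕜} (hA : A.PosDef) {x : ℝ}
    (hx : x ∈ spectrum ℝ A) : 0 < x := by
  obtain ⟨i, rfl⟩ := hA.isHermitian.spectrum_real_eq_range_eigenvalues ▸ hx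
  exact hA.eigenvalues_pos i

namespace IsHermitian

variable {A : Matrix n n 𝕜} (hA : A.IsHermitian)

/-- `|⟨e_k, f e_j⟩|²` for the orthonormal eigenbasis `(e_k)` of `A`. -/
def eigenWeight (f : Matrix n n 𝕜) (k j : n) : ℝ :=
  ‖(star (hA.eigenvectorUnitary : Matrix n n 𝕜) * f * hA.eigenvectorUnitary) k j‖ ^ 2

lemma eigenWeight_nonneg (f : Matrix n n 𝕜) (k j : n) : 0 ≤ hA.eigenWeight f k j := by
  unfold eigenWeight; positivity

lemma eigenWeight_comm {f : Matrix n n 𝕜} (hf : f.IsHermitian) (k j : n) :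
    hA.eigenWeight f k j = hA.eigenWeight f j k := by
  have hg : (star (hA.eigenvectorUnitary : Matrix n n 𝕜) * f * hA.eigenvectorUnitary).IsHermitian :=
    isHermitian_conjTranspose_mul_mul _ hf
  rw [eigenWeight, eigenWeight, ← hg.apply j k, norm_star]

lemma trace_mul_cfc_mul_cfc {f : Matrix n n 𝕜} (hf : f.IsHermitian) (φ ψ : ℝ → ℝ) :
    (f * cfc φ A * f * cfc ψ A).trace =
      ∑ k, ∑ j, hA.eigenWeight f k j * (φ (hA.eigenvalues j) * ψ (hA.eigenvalues k)) := by
  set U : Matrix n n 𝕜 := ↑hA.eigenvectorUnitary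
  set conj := Unitary.conjStarAlgAut 𝕜 (Matrix n n 𝕜) hA.eigenvectorUnitary
  set g := star U * f * U
  have hfg : f = conj g := (conj.apply_symm_apply f).symm
  have hg : g.IsHermitian := isHermitian_conjTranspose_mul_mul U hf
  change _ = ((∑ k, ∑ j, ‖g k j‖ ^ 2 * _ : ℝ) : 𝕜)
  conv_lhs => rw [hA.cfc_eq, hA.cfc_eq, IsHermitian.cfc, IsHermitian.cfc, hfg,
    ← map_mul, ← map_mul, ← map_mul, trace_conjStarAlgAut, trace_mul_diagonal_mul_mul_diagonal]
  push_cast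
  refine Finset.sum_congr rfl fun k _ => Finset.sum_congr rfl fun j _ => ?_
  have hjk : g j k = starRingEnd 𝕜 (g k j) := (hg.apply j k).symm
  simp only [Function.comp_apply]
  rw [hjk, ← RCLike.mul_conj]
  ring

end IsHermitian

lemma IsHermitian.smul_one_add_cfc {A : Matrix n n ℂ} (hA : A.IsHermitian) (c : ℝ) (h : ℝ → ℝ) :
    (c : ℂ) • (1 : Matrix n n ℂ) + cfc h A = cfc (fun x => c + h x) A := by
  rw [cfc_const_add c h A (finite_real_spectrum.continuousOn h) hA.isSelfAdjoint,
    Algebra.algebraMap_eq_smul_one, Complex.coe_smul]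

lemma IsHermitian.inv_cfc {A : Matrix n n 𝕜} (hA : A.IsHermitian) {h : ℝ → ℝ}
    (hh : ∀ x ∈ spectrum ℝ A, h x ≠ 0) :
    (cfc h A)⁻¹ = cfc (fun x => (h x)⁻¹) A := by
  rw [cfc_inv h A hh (finite_real_spectrum.continuousOn h) hA.isSelfAdjoint,
    nonsing_inv_eq_ringInverse]

end Matrix

section rpowM

variable {n : ℕ} {ρ : Matrix (Fin n) (Fin n) ℂ}

lemma rpowM_mul_rpowM (hρ : ρ.PosDef) (p q : ℝ) : rpowM ρ p * rpowM ρ q = rpowM ρ (p + q) := by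
  rw [rpowM, rpowM, rpowM, ← cfc_mul _ _ ρ (Matrix.finite_real_spectrum.continuousOn _)
    (Matrix.finite_real_spectrum.continuousOn _)]
  exact cfc_congr fun x hx => (Real.rpow_add (hρ.pos_of_mem_spectrum hx) p q).symm

lemma Bcoef_integrand_eq_mul_cfc_mul_cfc (hρ : ρ.PosDef) (f : Matrix (Fin n) (Fin n) ℂ)
    {s : ℝ} (hs : 0 < s) :
    f * (rpowM ρ (1/2) * ((s : ℂ) • 1 + rpowM ρ (1/2))⁻¹) * f *
      (((2 * s : ℝ) : ℂ) • 1 + rpowM ρ (1/2)) * (((s : ℂ) • 1 + rpowM ρ (1/2))⁻¹) ^ 2 * ρ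
    = f * cfc (fun x => x ^ (1/2 : ℝ) * (s + x ^ (1/2 : ℝ))⁻¹) ρ * f *
      cfc (fun x => (2 * s + x ^ (1/2 : ℝ)) * ((s + x ^ (1/2 : ℝ))⁻¹) ^ 2 * x) ρ := by
  have hρH := hρ.isHermitian
  have hcont (φ : ℝ → ℝ) : ContinuousOn φ (spectrum ℝ ρ) :=
    Matrix.finite_real_spectrum.continuousOn φ
  have hinv : ((s : ℂ) • 1 + rpowM ρ (1/2))⁻¹ = cfc (fun x => (s + x ^ (1/2 : ℝ))⁻¹) ρ := by
    rw [rpowM, hρH.smul_one_add_cfc, hρH.inv_cfc]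
    intro x hx
    have := hρ.pos_of_mem_spectrum hx
    positivity
  have hleft : cfc (fun x => x ^ (1/2 : ℝ) * (s + x ^ (1/2 : ℝ))⁻¹) ρ
      = rpowM ρ (1/2) * cfc (fun x => (s + x ^ (1/2 : ℝ))⁻¹) ρ :=
    cfc_mul _ _ ρ (hcont _) (hcont _)
  have hright : cfc (fun x => (2 * s + x ^ (1/2 : ℝ)) * ((s + x ^ (1/2 : ℝ))⁻¹) ^ 2 * x) ρ
      = (((2 * s : ℝ) : ℂ) • 1 + rpowM ρ (1/2)) *
          cfc (fun x => (s + x ^ (1/2 : ℝ))⁻¹) ρ ^ 2 * ρ := by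
    rw [cfc_mul (fun x => (2 * s + x ^ (1/2 : ℝ)) * ((s + x ^ (1/2 : ℝ))⁻¹) ^ 2) (fun x => x) ρ
        (hcont _) (hcont _), cfc_id' ℝ ρ hρH.isSelfAdjoint, cfc_mul _ _ ρ (hcont _) (hcont _),
      cfc_pow _ _ ρ (hcont _) hρH.isSelfAdjoint, rpowM, hρH.smul_one_add_cfc]
  rw [hinv, hleft, hright]
  simp only [mul_assoc]

lemma rpow_half_mul_eq_bKernel {x y : ℝ} (hx : 0 ≤ x) (s : ℝ) :
    y ^ (1/2 : ℝ) * (s + y ^ (1/2 : ℝ))⁻¹ *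
        ((2 * s + x ^ (1/2 : ℝ)) * ((s + x ^ (1/2 : ℝ))⁻¹) ^ 2 * x)
      = bKernel (x ^ (1/2 : ℝ)) (y ^ (1/2 : ℝ)) s := by
  have hsq : (x ^ (1/2 : ℝ)) ^ 2 = x := by rw [← Real.sqrt_eq_rpow, Real.sq_sqrt hx]
  rw [bKernel, hsq, div_eq_mul_inv, div_eq_mul_inv, inv_pow]
  ring

lemma Bcoef_eq_sum (hρ : ρ.PosDef) {f : Matrix (Fin n) (Fin n) ℂ} (hf : f.IsHermitian) :
    Bcoef ρ f = ∑ k, ∑ j, hρ.isHermitian.eigenWeight f k j *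
      ∫ s in Ioi 0, bKernel (hρ.isHermitian.eigenvalues k ^ (1/2 : ℝ))
        (hρ.isHermitian.eigenvalues j ^ (1/2 : ℝ)) s := by
  set lam := hρ.isHermitian.eigenvalues
  have hpos (k) : 0 < lam k ^ (1/2 : ℝ) := by positivity [hρ.eigenvalues_pos k]
  have hint (k j) : IntegrableOn (fun s => hρ.isHermitian.eigenWeight f k j *
      bKernel (lam k ^ (1/2 : ℝ)) (lam j ^ (1/2 : ℝ)) s) (Ioi 0) :=
    (integrableOn_bKernel (hpos k) (hpos j)).const_mul _
  rw [Bcoef, setIntegral_congr_fun measurableSet_Ioi (g := fun s => ∑ k, ∑ j,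
      hρ.isHermitian.eigenWeight f k j * bKernel (lam k ^ (1/2 : ℝ)) (lam j ^ (1/2 : ℝ)) s)
      fun s hs => ?_, integral_finsetSum _ fun k _ => integrable_finsetSum _ fun j _ => hint k j]
  · refine Finset.sum_congr rfl fun k _ => ?_
    rw [integral_finsetSum _ fun j _ => hint k j]
    exact Finset.sum_congr rfl fun j _ => integral_const_mul _ _
  · rw [Bcoef_integrand_eq_mul_cfc_mul_cfc hρ f hs, hρ.isHermitian.trace_mul_cfc_mul_cfc hf,
      ← RCLike.re_to_complex, RCLike.ofReal_re]
    simp only [rpow_half_mul_eq_bKernel (hρ.eigenvalues_pos _).le]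
    rfl

lemma re_trace_sq_eq_sum (hρ : ρ.PosDef) {f : Matrix (Fin n) (Fin n) ℂ} (hf : f.IsHermitian) :
    (((rpowM ρ (1/4) * f * rpowM ρ (1/4)) * (rpowM ρ (1/4) * f * rpowM ρ (1/4))).trace).re =
      ∑ k, ∑ j, hρ.isHermitian.eigenWeight f k j *
        (hρ.isHermitian.eigenvalues j ^ (1/2 : ℝ) * hρ.isHermitian.eigenvalues k ^ (1/2 : ℝ)) := by
  set Q := rpowM ρ (1/4)
  have hQQ : Q * Q = rpowM ρ (1/2) := by rw [rpowM_mul_rpowM hρ]; norm_num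
  calc (((Q * f * Q) * (Q * f * Q)).trace).re
      = ((Q * (f * (Q * Q) * f * Q)).trace).re := by simp only [mul_assoc]
    _ = ((f * rpowM ρ (1/2) * f * rpowM ρ (1/2)).trace).re := by
        rw [Matrix.trace_mul_comm]; simp only [mul_assoc, hQQ]
    _ = _ := by
        rw [rpowM, hρ.isHermitian.trace_mul_cfc_mul_cfc hf, ← RCLike.re_to_complex,
          RCLike.ofReal_re]

end rpowM

theorem Bcoef_ge_general (n : ℕ) (ρ f : Matrix (Fin n) (Fin n) ℂ)
    (hρ : ρ.PosDef)
    (hf : f.IsHermitian) :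
    Bcoef ρ f ≥ 3 / 2 *
      (((rpowM ρ (1/4) * f * rpowM ρ (1/4)) * (rpowM ρ (1/4) * f * rpowM ρ (1/4))).trace).re := by
  set hρH := hρ.isHermitian
  set a : Fin n → ℝ := fun k => hρH.eigenvalues k ^ (1/2 : ℝ)
  have ha (k : Fin n) : 0 < a k := by positivity [hρ.eigenvalues_pos k]
  have hsym := sum_sum_mul_le_two_mul_of_symm (hρH.eigenWeight_nonneg f) (hρH.eigenWeight_comm hf)
    (fun k j => three_mul_le_integral_bKernel_add (ha k) (ha j))
  rw [Bcoef_eq_sum hρ hf, re_trace_sq_eq_sum hρ hf, ge_iff_le]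
  calc 3 / 2 * ∑ k, ∑ j, hρH.eigenWeight f k j * (a j * a k)
      = 1 / 2 * ∑ k, ∑ j, hρH.eigenWeight f k j * (3 * (a k * a j)) := by
        simp only [Finset.mul_sum]
        exact Finset.sum_congr rfl fun k _ => Finset.sum_congr rfl fun j _ => by ring
    _ ≤ _ := by linarith

/-- For `ρ` a strictly positive density, `f` self-adjoint with `tr(ρ f) = 0` and
`f̄ = ρ^{1/4} f ρ^{1/4}`, one has `B(f) ≥ (3/2)·tr(f̄²)`. -/
theorem Bcoef_ge (n : ℕ) (ρ f : Matrix (Fin n) (Fin n) ℂ)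
    (hρ : ρ.PosDef) (hρtr : ρ.trace = 1)
    (hf : f.IsHermitian) (hftr : (ρ * f).trace = 0) :
    Bcoef ρ f ≥ 3 / 2 *
      (((rpowM ρ (1/4) * f * rpowM ρ (1/4)) * (rpowM ρ (1/4) * f * rpowM ρ (1/4))).trace).re :=
  Bcoef_ge_general n ρ f hρ hf

end
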